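/- Let μ, λ be partitions of n, u a standard μ-tableau, t a standard λ-tableau, and suppose i is a strong descent of both u and t (i.e., col_u(i) > col_u(i+1) and col_t(i) > col_t(i+1)). Then u ≤ t in the extended dominance order if and only if s_i·u ≤ s_i·t, where s_i·t is the tableau obtained by swapping the entries i and i+1. -/

import Mathlib

/-- Partial sum `λ₁ + ⋯ + λ_k` of a 1-indexed sequence of parts. -/
def psum (lam : ℕ → ℕ) (k : ℕ) : ℕ := ∑ i ∈ Finset.Icc 1 k, lam i

/-- `lam` is a composition of `n` (1-indexed parts, extended by zeros). -/
def IsComp (n : ℕ) (lam : ℕ → ℕ) : Prop :=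
  lam 0 = 0 ∧ ∃ N, (∀ i, N < i → lam i = 0) ∧ psum lam N = n

/-- `lam` is a partition of `n` (weakly decreasing parts). -/
def IsPartition (n : ℕ) (lam : ℕ → ℕ) : Prop :=
  IsComp n lam ∧ ∀ i j, 1 ≤ i → i ≤ j → lam j ≤ lam i

/-- Dominance order in the paper's (column) convention: `lam` dominates `mu`
(written `mu ≤ lam`) iff every partial sum of `lam` is at most the
corresponding partial sum of `mu`. -/
def Dominates (lam mu : ℕ → ℕ) : Prop := ∀ k, psum lam k ≤ psum mu k

/-- Row index of the box containing the entry `k`. -/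
def rowT (p : ℕ → ℕ × ℕ) (k : ℕ) : ℕ := (p k).1
/-- Column index of the box containing the entry `k`. -/
def colT (p : ℕ → ℕ × ℕ) (k : ℕ) : ℕ := (p k).2

/-- `p` is the position function of a bijective filling of the skew diagram
`[lam] ∖ [mu]` (1-indexed rows and columns, `lam j` boxes in column `j`)
by the entries `a+1, …, a+n`. -/
def IsSkewTab (lam mu : ℕ → ℕ) (a n : ℕ) (p : ℕ → ℕ × ℕ) : Prop :=
  (∀ k ∈ Finset.Icc (a+1) (a+n),
      1 ≤ (p k).2 ∧ mu (p k).2 < (p k).1 ∧ (p k).1 ≤ lam (p k).2) ∧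
  (∀ k ∈ Finset.Icc (a+1) (a+n), ∀ l ∈ Finset.Icc (a+1) (a+n), p k = p l → k = l) ∧
  (∀ c : ℕ × ℕ, 1 ≤ c.2 → mu c.2 < c.1 → c.1 ≤ lam c.2 →
      ∃ k ∈ Finset.Icc (a+1) (a+n), p k = c)

/-- A straight-shape `lam`-tableau with entries `1, …, n`. -/
def IsTab (lam : ℕ → ℕ) (n : ℕ) (p : ℕ → ℕ × ℕ) : Prop :=
  IsSkewTab lam (fun _ => 0) 0 n p

/-- Entries increase down each column. -/
def ColStd (a n : ℕ) (p : ℕ → ℕ × ℕ) : Prop :=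
  ∀ k ∈ Finset.Icc (a+1) (a+n), ∀ l ∈ Finset.Icc (a+1) (a+n),
    colT p k = colT p l → rowT p k < rowT p l → k < l

/-- Entries increase along each row. -/
def RowStd (a n : ℕ) (p : ℕ → ℕ × ℕ) : Prop :=
  ∀ k ∈ Finset.Icc (a+1) (a+n), ∀ l ∈ Finset.Icc (a+1) (a+n),
    rowT p k = rowT p l → colT p k < colT p l → k < l

/-- Standard skew tableau of shape `lam/mu` with entries `a+1, …, a+n`. -/
def IsStdSkew (lam mu : ℕ → ℕ) (a n : ℕ) (p : ℕ → ℕ × ℕ) : Prop :=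
  IsSkewTab lam mu a n p ∧ ColStd a n p ∧ RowStd a n p

/-- Standard `lam`-tableau with entries `1, …, n`. -/
def IsStd (lam : ℕ → ℕ) (n : ℕ) (p : ℕ → ℕ × ℕ) : Prop :=
  IsStdSkew lam (fun _ => 0) 0 n p

/-- Column standard straight-shape `lam`-tableau. -/
def IsColStdTab (lam : ℕ → ℕ) (n : ℕ) (p : ℕ → ℕ × ℕ) : Prop :=
  IsTab lam n p ∧ ColStd 0 n p

/-- `i ∈ D(p)`: a descent, `col(i) ≥ col(i+1)`. -/
def inD (a n : ℕ) (p : ℕ → ℕ × ℕ) (i : ℕ) : Prop :=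
  a + 1 ≤ i ∧ i + 1 ≤ a + n ∧ colT p (i+1) ≤ colT p i
/-- `i ∈ SD(p)`: a strong descent, `col(i) > col(i+1)`. -/
def inSD (a n : ℕ) (p : ℕ → ℕ × ℕ) (i : ℕ) : Prop :=
  a + 1 ≤ i ∧ i + 1 ≤ a + n ∧ colT p (i+1) < colT p i
/-- `i ∈ WD(p)`: a weak descent, `col(i) = col(i+1)`. -/
def inWD (a n : ℕ) (p : ℕ → ℕ × ℕ) (i : ℕ) : Prop :=
  a + 1 ≤ i ∧ i + 1 ≤ a + n ∧ colT p (i+1) = colT p i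
/-- `i ∈ A(p)`: an ascent, `col(i) < col(i+1)`. -/
def inA (a n : ℕ) (p : ℕ → ℕ × ℕ) (i : ℕ) : Prop :=
  a + 1 ≤ i ∧ i + 1 ≤ a + n ∧ colT p i < colT p (i+1)
/-- `i ∈ SA(p)`: a strong ascent, `row(i) > row(i+1)`. -/
def inSA (a n : ℕ) (p : ℕ → ℕ × ℕ) (i : ℕ) : Prop :=
  a + 1 ≤ i ∧ i + 1 ≤ a + n ∧ rowT p (i+1) < rowT p i

/-- Descent set of a tableau with entries `1, …, n`. -/
def Dset (n : ℕ) (p : ℕ → ℕ × ℕ) : Set ℕ := {i | inD 0 n p i}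

/-- Shape of the restriction of `p` to entries `≤ m`: the number of boxes
of column `j` occupied by entries `≤ m`. -/
def resShape (p : ℕ → ℕ × ℕ) (m j : ℕ) : ℕ :=
  ((Finset.Icc 1 m).filter (fun k => colT p k = j)).card

/-- Extended dominance order on standard tableaux with `n` boxes: `u ≤ t`. -/
def ExtDomLe (n : ℕ) (pu pt : ℕ → ℕ × ℕ) : Prop :=
  ∀ m ∈ Finset.Icc 1 n, Dominates (fun j => resShape pt m j) (fun j => resShape pu m j)

/-- `i` is the restriction number of `(u,t)`: the restrictions to entries `≤ i`
agree, and `i` is maximal with this property. -/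
def RestNum (n : ℕ) (pu pt : ℕ → ℕ × ℕ) (i : ℕ) : Prop :=
  i ≤ n ∧ (∀ k, 1 ≤ k → k ≤ i → pu k = pt k) ∧ (i = n ∨ pu (i+1) ≠ pt (i+1))

/-- `(u,t)` is favourable with restriction number `i`:
`i` lies in the symmetric difference `D(u) ⊕ D(t)`. -/
def Favourable (n : ℕ) (pu pt : ℕ → ℕ × ℕ) (i : ℕ) : Prop :=
  RestNum n pu pt i ∧
    ((inD 0 n pu i ∧ ¬ inD 0 n pt i) ∨ (inD 0 n pt i ∧ ¬ inD 0 n pu i))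

/-- Dual Knuth move of the first kind of index `k` from `u` to `t`,
on standard tableaux of shape `lam`:  `t = s_k u` with
`D(u) ∩ {k-1,k} = {k-1}` and `D(t) ∩ {k-1,k} = {k}`. -/
def DK1 (lam : ℕ → ℕ) (n : ℕ) (pu pt : ℕ → ℕ × ℕ) (k : ℕ) : Prop :=
  IsStd lam n pu ∧ IsStd lam n pt ∧ 2 ≤ k ∧
  (∀ m, pt m = pu (Equiv.swap k (k+1) m)) ∧
  inD 0 n pu (k-1) ∧ ¬ inD 0 n pu k ∧ inD 0 n pt k ∧ ¬ inD 0 n pt (k-1)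

/-- Dual Knuth move of the second kind of index `k` from `u` to `t`:
`t = s_k u` with `D(u) ∩ {k,k+1} = {k+1}` and `D(t) ∩ {k,k+1} = {k}`. -/
def DK2 (lam : ℕ → ℕ) (n : ℕ) (pu pt : ℕ → ℕ × ℕ) (k : ℕ) : Prop :=
  IsStd lam n pu ∧ IsStd lam n pt ∧ k + 2 ≤ n ∧
  (∀ m, pt m = pu (Equiv.swap k (k+1) m)) ∧
  inD 0 n pu (k+1) ∧ ¬ inD 0 n pu k ∧ inD 0 n pt k ∧ ¬ inD 0 n pt (k+1)

/-- A dual Knuth move (of either kind) of index `k` from `u` to `t`. -/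
def DKMove (lam : ℕ → ℕ) (n : ℕ) (pu pt : ℕ → ℕ × ℕ) (k : ℕ) : Prop :=
  DK1 lam n pu pt k ∨ DK2 lam n pu pt k

/-- A paired dual Knuth move: a dual Knuth move of the same kind and the same
index applied simultaneously to both components of a pair. -/
def PairedDKMove (mu lam : ℕ → ℕ) (n : ℕ)
    (a b : (ℕ → ℕ × ℕ) × (ℕ → ℕ × ℕ)) : Prop :=
  ∃ k, (DK1 mu n a.1 b.1 k ∧ DK1 lam n a.2 b.2 k) ∨
       (DK2 mu n a.1 b.1 k ∧ DK2 lam n a.2 b.2 k)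

/-- Paired dual Knuth equivalence: the equivalence relation generated by
paired dual Knuth moves. -/
def PairedDKEquiv (mu lam : ℕ → ℕ) (n : ℕ)
    (a b : (ℕ → ℕ × ℕ) × (ℕ → ℕ × ℕ)) : Prop :=
  Relation.ReflTransGen
    (fun x y => PairedDKMove mu lam n x y ∨ PairedDKMove mu lam n y x) a b

/-- Lexicographic order on same-shape column standard tableaux: `u <_lex t`. -/
def LexLT (n : ℕ) (pu pt : ℕ → ℕ × ℕ) : Prop :=
  ∃ l, 1 ≤ l ∧ l ≤ n ∧ colT pt l < colT pu l ∧
    ∀ m, l < m → m ≤ n → colT pt m = colT pu m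

/-- `w` is a permutation of `[1,n]`, fixing all other natural numbers. -/
def IsPermOf (n : ℕ) (w : ℕ → ℕ) : Prop :=
  (∀ k ∈ Finset.Icc 1 n, w k ∈ Finset.Icc 1 n) ∧
  (∀ k ∈ Finset.Icc 1 n, ∀ l ∈ Finset.Icc 1 n, w k = w l → k = l) ∧
  (∀ k, k ∉ Finset.Icc 1 n → w k = k)

/-- The Coxeter length of `w ∈ S_n`: the number of inversions. -/
def lenInv (n : ℕ) (w : ℕ → ℕ) : ℕ :=
  ((Finset.Icc 1 n ×ˢ Finset.Icc 1 n).filter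
    (fun q => q.1 < q.2 ∧ w q.2 < w q.1)).card

/-- One step of the Bruhat order on `S_n`: `y = (i j) ∘ x` (so `y x⁻¹` is a
reflection) with `l(x) < l(y)`. -/
def BruhatStep (n : ℕ) (x y : ℕ → ℕ) : Prop :=
  lenInv n x < lenInv n y ∧
  ∃ i j, 1 ≤ i ∧ i < j ∧ j ≤ n ∧ ∀ k, y k = Equiv.swap i j (x k)

/-- The Bruhat order on `S_n`. -/
def BruhatLe (n : ℕ) (x y : ℕ → ℕ) : Prop :=
  Relation.ReflTransGen (BruhatStep n) x y

/-- One step of the left weak order on `S_n`: `y = s_i ∘ x` with `l(x) < l(y)`. -/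
def WeakStep (n : ℕ) (x y : ℕ → ℕ) : Prop :=
  lenInv n x < lenInv n y ∧
  ∃ i, 1 ≤ i ∧ i + 1 ≤ n ∧ ∀ k, y k = Equiv.swap i (i+1) (x k)

/-- The left weak order on `S_n`. -/
def WeakLe (n : ℕ) (x y : ℕ → ℕ) : Prop :=
  Relation.ReflTransGen (WeakStep n) x y

/-- `ptau` is (the position function of) the column superstandard tableau
`τ_lam`: column standard, with the columns filled in order from left to right. -/
def IsSuperstandard (lam : ℕ → ℕ) (n : ℕ) (ptau : ℕ → ℕ × ℕ) : Prop :=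
  IsTab lam n ptau ∧ ColStd 0 n ptau ∧
  ∀ k, 1 ≤ k → k + 1 ≤ n → colT ptau k ≤ colT ptau (k+1)

/-- `w = perm(t)`, i.e. `w · τ_lam = t`: for each `k`, the box of `τ_lam`
containing `k` contains `w k` in `t`. -/
def IsPermTab (n : ℕ) (ptau pt : ℕ → ℕ × ℕ) (w : ℕ → ℕ) : Prop :=
  IsPermOf n w ∧ ∀ k ∈ Finset.Icc 1 n, pt (w k) = ptau k

/-- `p` (a standard skew tableau of shape `lam/mu` with entries `a+1, …, a+n`)
is the `(a+1)`-critical tableau: writing `m = a+1`, the entry `m` lies in the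
first nonempty column `i` of the skew diagram, `m+1` lies in column `i+1`,
and the restriction to entries `> m+1` is minimal (no strong descents). -/
def IsCritical (lam mu : ℕ → ℕ) (a n : ℕ) (p : ℕ → ℕ × ℕ) : Prop :=
  IsStdSkew lam mu a n p ∧
  (∀ j, 1 ≤ j → j < colT p (a+1) → lam j ≤ mu j) ∧
  mu (colT p (a+1)) < lam (colT p (a+1)) ∧
  colT p (a+2) = colT p (a+1) + 1 ∧
  ∀ i, a + 3 ≤ i → i + 1 ≤ a + n → colT p i ≤ colT p (i+1)

/-- The box `c` is removable from the diagram of `lam`. -/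
def Removable (lam : ℕ → ℕ) (c : ℕ × ℕ) : Prop :=
  1 ≤ c.2 ∧ c.1 = lam c.2 ∧ lam (c.2 + 1) < c.1

/-- One step of a jeu de taquin slide on a filling `p` with entries `1, …, n`:
the hole moves from `b` to `b'`, where `b'` is the box (below or to the right
of `b`) containing the smaller entry `x` among the occupied candidates, and the
filling is updated by moving `x` into `b`. -/
def SlideStep (n : ℕ) (p : ℕ → ℕ × ℕ) (b : ℕ × ℕ)
    (p' : ℕ → ℕ × ℕ) (b' : ℕ × ℕ) : Prop :=
  ∃ x, 1 ≤ x ∧ x ≤ n ∧ p x = b' ∧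
    (b' = (b.1 + 1, b.2) ∨ b' = (b.1, b.2 + 1)) ∧
    (∀ y, 1 ≤ y → y ≤ n → (p y = (b.1 + 1, b.2) ∨ p y = (b.1, b.2 + 1)) → x ≤ y) ∧
    (∀ y, p' y = if y = x then b else p y)

/-- `lam/mu` is a skew partition of `n`. -/
def IsSkewShape (n : ℕ) (lam mu : ℕ → ℕ) : Prop :=
  (∃ m, IsPartition (m + n) lam ∧ IsPartition m mu) ∧ ∀ j, mu j ≤ lam j

/-!
Write `N_p(m, k)` for the number of entries `≤ m` of `p` in the first `k` columns, so that
`u ≤ t` means `N_t(m, k) ≤ N_u(m, k)` for all `m, k`. Swapping `i` and `i + 1` changes `N` only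
at `m = i`, where `N_{s_i p}(i, k) = N_p(i - 1, k) + [col_p(i + 1) ≤ k]`. The new inequality
follows from the one at `i - 1` except when `col_t(i + 1) ≤ k < col_u(i + 1)`; then the strong
descent of `u` keeps both `i` and `i + 1` of `u` out of the first `k` columns, and the
inequality at `i + 1` supplies the missing box. The converse is the same argument for
`s_i u, s_i t`, where the strong descent of `t` plays this role.
-/

def numInFirstCols (p : ℕ → ℕ × ℕ) (m k : ℕ) : ℕ :=
  ((Finset.Icc 1 m).filter (fun l => colT p l ∈ Finset.Icc 1 k)).card

section NumInFirstCols

variable (p : ℕ → ℕ × ℕ)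

theorem psum_resShape (m k : ℕ) :
    psum (fun j => resShape p m j) k = numInFirstCols p m k := by
  have hmaps : Set.MapsTo (colT p)
      ((Finset.Icc 1 m).filter (fun l => colT p l ∈ Finset.Icc 1 k) : Finset ℕ) (Finset.Icc 1 k) :=
    fun l hl => (Finset.mem_filter.mp hl).2
  rw [numInFirstCols, Finset.card_eq_sum_card_fiberwise hmaps]
  refine Finset.sum_congr rfl fun j hj => ?_
  simp only [resShape, Finset.filter_filter]
  congr 1
  refine Finset.filter_congr fun l _ => ⟨fun hl => ⟨hl ▸ hj, hl⟩, And.right⟩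

theorem numInFirstCols_zero (k : ℕ) : numInFirstCols p 0 k = 0 := by
  simp [numInFirstCols]

theorem numInFirstCols_succ (m k : ℕ) :
    numInFirstCols p (m + 1) k =
      numInFirstCols p m k + if colT p (m + 1) ∈ Finset.Icc 1 k then 1 else 0 := by
  rw [numInFirstCols, numInFirstCols,
    ← Finset.insert_Icc_right_eq_Icc_add_one (Nat.le_add_left 1 m), Finset.filter_insert]
  split_ifs
  · exact Finset.card_insert_of_notMem (by simp)
  · rfl

theorem swap_mem_Icc_one_iff {i m : ℕ} (hi : 1 ≤ i) (hm : m ≠ i) (l : ℕ) :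
    Equiv.swap i (i + 1) l ∈ Finset.Icc 1 m ↔ l ∈ Finset.Icc 1 m := by
  simp only [Finset.mem_Icc, Equiv.swap_apply_def]
  split_ifs <;> omega

theorem numInFirstCols_swap_of_ne {ps : ℕ → ℕ × ℕ} {i : ℕ}
    (hs : ∀ l, ps l = p (Equiv.swap i (i + 1) l)) (hi : 1 ≤ i) {m : ℕ} (hm : m ≠ i) (k : ℕ) :
    numInFirstCols ps m k = numInFirstCols p m k := by
  refine Finset.card_equiv (Equiv.swap i (i + 1)) fun l => ?_
  rw [Finset.mem_filter, Finset.mem_filter, swap_mem_Icc_one_iff hi hm, colT, colT, hs]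

end NumInFirstCols

theorem extDomLe_iff (n : ℕ) (pu pt : ℕ → ℕ × ℕ) :
    ExtDomLe n pu pt ↔ ∀ m ≤ n, ∀ k, numInFirstCols pt m k ≤ numInFirstCols pu m k := by
  simp only [ExtDomLe, Dominates, psum_resShape, Finset.mem_Icc]
  refine ⟨fun h m hm k => ?_, fun h m hm => h m hm.2⟩
  rcases Nat.eq_zero_or_pos m with rfl | hpos
  · simp [numInFirstCols_zero]
  · exact h m ⟨hpos, hm⟩ k

theorem IsSkewTab.one_le_colT {lam mu : ℕ → ℕ} {a n : ℕ} {p : ℕ → ℕ × ℕ}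
    (h : IsSkewTab lam mu a n p) {l : ℕ} (hl : l ∈ Finset.Icc (a + 1) (a + n)) :
    1 ≤ colT p l :=
  (h.1 l hl).1

theorem ExtDomLe.swap {n i : ℕ} {pu pt psu pst : ℕ → ℕ × ℕ} (h : ExtDomLe n pu pt)
    (hi : 1 ≤ i) (hin : i + 1 ≤ n)
    (hsu : ∀ m, psu m = pu (Equiv.swap i (i + 1) m))
    (hst : ∀ m, pst m = pt (Equiv.swap i (i + 1) m))
    (hcol : (1 ≤ colT pu (i + 1) ∧ colT pu (i + 1) < colT pu i) ∨
      (1 ≤ colT pt i ∧ colT pt i < colT pt (i + 1))) :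
    ExtDomLe n psu pst := by
  rw [extDomLe_iff] at h ⊢
  intro m hm k
  rcases eq_or_ne m i with rfl | hmi
  · obtain ⟨j, rfl⟩ : ∃ j, m = j + 1 := ⟨m - 1, by omega⟩
    have hbefore := h j (by omega) k
    have hafter := h (j + 1 + 1) hin k
    rw [numInFirstCols_succ pu, numInFirstCols_succ pu, numInFirstCols_succ pt,
      numInFirstCols_succ pt] at hafter
    rw [numInFirstCols_succ psu, numInFirstCols_succ pst,
      numInFirstCols_swap_of_ne pu hsu hi (by omega),
      numInFirstCols_swap_of_ne pt hst hi (by omega)]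
    simp only [colT, hsu, hst, Equiv.swap_apply_left] at hcol hafter ⊢
    simp only [Finset.mem_Icc] at hafter ⊢
    split_ifs at hafter ⊢ <;> omega
  · rw [numInFirstCols_swap_of_ne pu hsu hi hmi, numInFirstCols_swap_of_ne pt hst hi hmi]
    exact h m hm k

theorem extDom_iff_swap_general (n : ℕ) (mu lam : ℕ → ℕ)
    (pu pt psu pst : ℕ → ℕ × ℕ)
    (hu : IsStd mu n pu) (ht : IsStd lam n pt)
    (i : ℕ) (hiu : inSD 0 n pu i) (hit : inSD 0 n pt i)
    (hsu : ∀ m, psu m = pu (Equiv.swap i (i+1) m))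
    (hst : ∀ m, pst m = pt (Equiv.swap i (i+1) m)) :
    ExtDomLe n pu pt ↔ ExtDomLe n psu pst := by
  obtain ⟨hi, hin, hdesc_u⟩ := hiu
  obtain ⟨-, -, hdesc_t⟩ := hit
  simp only [zero_add] at hi hin
  have hcol_u : 1 ≤ colT pu (i + 1) := hu.1.one_le_colT (Finset.mem_Icc.mpr ⟨by omega, by omega⟩)
  have hcol_t : 1 ≤ colT pt (i + 1) := ht.1.one_le_colT (Finset.mem_Icc.mpr ⟨by omega, by omega⟩)
  constructor
  · exact fun h => h.swap hi hin hsu hst (Or.inl ⟨hcol_u, hdesc_u⟩)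
  · intro h
    have hsu' : ∀ m, pu m = psu (Equiv.swap i (i + 1) m) := fun m => by
      rw [hsu, Equiv.swap_apply_self]
    have hst' : ∀ m, pt m = pst (Equiv.swap i (i + 1) m) := fun m => by
      rw [hst, Equiv.swap_apply_self]
    refine h.swap hi hin hsu' hst' (Or.inr ?_)
    simp only [colT, hst, Equiv.swap_apply_left, Equiv.swap_apply_right]
    exact ⟨hcol_t, hdesc_t⟩

/-- the extended dominance order is preserved by simultaneously
swapping `i` and `i+1` when `i` is a strong descent of both tableaux. -/
theorem extDom_iff_swap (n : ℕ) (mu lam : ℕ → ℕ)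
    (hmu : IsPartition n mu) (hlam : IsPartition n lam)
    (pu pt psu pst : ℕ → ℕ × ℕ)
    (hu : IsStd mu n pu) (ht : IsStd lam n pt)
    (i : ℕ) (hiu : inSD 0 n pu i) (hit : inSD 0 n pt i)
    (hsu : ∀ m, psu m = pu (Equiv.swap i (i+1) m))
    (hst : ∀ m, pst m = pt (Equiv.swap i (i+1) m)) :
    ExtDomLe n pu pt ↔ ExtDomLe n psu pst :=
  extDom_iff_swap_general n mu lam pu pt psu pst hu ht i hiu hit hsu hst
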